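/- The coordinates of P₁₂ and P₃₁ satisfy the Weierstrass equation of W, and in the group W(K) the sum P₁₂ + P₃₁ equals Q₀ or −Q₀, where Q₀ is the K-point with coordinates ((5/4)t² − 2t + 3, (5/8)t³ − 6t² + (31/2)t − 12). (The x-coordinate of Q₀ gives the weak contact conic C₃ : x = (5/4)t² − 2t + 3 of C₁+C₂.) -/

import Mathlib

open WeierstrassCurve.Affine (Point)

noncomputable section

/-- `K = ℂ(t)`, the field of rational functions in one variable over `ℂ`. -/
abbrev K : Type := RatFunc ℂ

/-- The variable `t` of `K = ℂ(t)`. -/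
def t : K := RatFunc.X

/-- The elliptic curve `W : y² = (x - t²)(x² - 10tx + 25x - 36)`, i.e.
`y² = x³ + (25 - 10t - t²)x² + (10t³ - 25t² - 36)x + 36t²`, over `K`. -/
def W : WeierstrassCurve.Affine K where
  a₁ := 0
  a₂ := 25 - 10 * t - t ^ 2
  a₃ := 0
  a₄ := 10 * t ^ 3 - 25 * t ^ 2 - 36
  a₆ := 36 * t ^ 2

/-- Coordinates of the point `P₁₂` coming from the line `L₁₂ : x = 5t - 6`. -/
def xP12 : K := 5 * t - 6
def yP12 : K := -(5 * (t - 2) * (t - 3))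

/-- Coordinates of the point `P₂₃` coming from the line `L₂₃ : x = 8t - 12`. -/
def xP23 : K := 8 * t - 12
def yP23 : K := -(4 * (t - 2) * (t - 6))

/-- Coordinates of the point `P₃₁` coming from the line `L₃₁ : x = 9t - 18`. -/
def xP31 : K := 9 * t - 18
def yP31 : K := -(3 * (t - 3) * (t - 6))

/-! `P₁₂` and `P₃₁` are nonsingular because their `y`-coordinates are nonzero (`∂/∂y = 2y` on `W`),
and `x(P₁₂) ≠ x(P₃₁)`, so their sum comes from the chord: the line through them has slope `(t + 4)/2`
and meets `W` a third time in `(x(Q₀), -y(Q₀))`, whence `P₁₂ + P₃₁ = -Q₀`. -/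

lemma RatFunc.X_sub_C_ne_zero {F : Type*} [Field F] (c : F) : (X : RatFunc F) - C c ≠ 0 := by
  rw [← algebraMap_X, ← algebraMap_C, ← map_sub]
  exact algebraMap_ne_zero (Polynomial.X_sub_C_ne_zero c)

lemma t_sub_ofNat_ne_zero (n : ℕ) [n.AtLeastTwo] : t - (OfNat.ofNat n : K) ≠ 0 := by
  simpa [t, map_ofNat] using RatFunc.X_sub_C_ne_zero (OfNat.ofNat n : ℂ)

namespace WeierstrassCurve.Affine

variable {F : Type*} [Field F] {W : Affine F}

lemma nonsingular_of_Y_ne_zero [NeZero (2 : F)] (ha₁ : W.a₁ = 0) (ha₃ : W.a₃ = 0) {x y : F}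
    (h : W.Equation x y) (hy : y ≠ 0) : W.Nonsingular x y := by
  rw [nonsingular_iff', ha₁, ha₃]
  exact ⟨h, Or.inr (by rw [zero_mul, add_zero, add_zero]; exact mul_ne_zero two_ne_zero hy)⟩

lemma Point.exists_some_add_some_eq_neg_some [DecidableEq F] {x₁ x₂ y₁ y₂ x₃ y₃ : F}
    (h₁ : W.Nonsingular x₁ y₁) (h₂ : W.Nonsingular x₂ y₂) (hx : x₁ ≠ x₂)
    (hx₃ : W.addX x₁ x₂ (W.slope x₁ x₂ y₁ y₂) = x₃)
    (hy₃ : W.negAddY x₁ x₂ y₁ (W.slope x₁ x₂ y₁ y₂) = y₃) :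
    ∃ h₃ : W.Nonsingular x₃ y₃, Point.some _ _ h₁ + Point.some _ _ h₂ = -Point.some _ _ h₃ := by
  subst hx₃ hy₃
  exact ⟨nonsingular_negAdd h₁ h₂ fun h ↦ hx h.1, Point.add_of_X_ne' hx⟩

end WeierstrassCurve.Affine

lemma equation_P12 : W.Equation xP12 yP12 := by
  rw [WeierstrassCurve.Affine.equation_iff]
  simp only [W, xP12, yP12]
  ring

lemma equation_P31 : W.Equation xP31 yP31 := by
  rw [WeierstrassCurve.Affine.equation_iff]
  simp only [W, xP31, yP31]
  ring

lemma yP12_ne_zero : yP12 ≠ 0 :=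
  neg_ne_zero.2 <| mul_ne_zero (mul_ne_zero (by norm_num) (t_sub_ofNat_ne_zero 2))
    (t_sub_ofNat_ne_zero 3)

lemma yP31_ne_zero : yP31 ≠ 0 :=
  neg_ne_zero.2 <| mul_ne_zero (mul_ne_zero (by norm_num) (t_sub_ofNat_ne_zero 3))
    (t_sub_ofNat_ne_zero 6)

lemma nonsingular_P12 : W.Nonsingular xP12 yP12 :=
  W.nonsingular_of_Y_ne_zero rfl rfl equation_P12 yP12_ne_zero

lemma nonsingular_P31 : W.Nonsingular xP31 yP31 :=
  W.nonsingular_of_Y_ne_zero rfl rfl equation_P31 yP31_ne_zero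

lemma xP12_sub_xP31 : xP12 - xP31 = -4 * (t - 3) := by
  simp only [xP12, xP31]
  ring

lemma xP12_ne_xP31 : xP12 ≠ xP31 := by
  rw [← sub_ne_zero, xP12_sub_xP31]
  exact mul_ne_zero (by norm_num) (t_sub_ofNat_ne_zero 3)

section

open scoped Classical

lemma slope_P12_P31 : W.slope xP12 xP31 yP12 yP31 = (t + 4) / 2 := by
  rw [WeierstrassCurve.Affine.slope_of_X_ne xP12_ne_xP31, div_eq_iff (sub_ne_zero.2 xP12_ne_xP31),
    xP12_sub_xP31]
  simp only [yP12, yP31]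
  ring

lemma addX_P12_P31 :
    W.addX xP12 xP31 (W.slope xP12 xP31 yP12 yP31) = 5 / 4 * t ^ 2 - 2 * t + 3 := by
  rw [slope_P12_P31]
  simp only [WeierstrassCurve.Affine.addX, W, xP12, xP31]
  ring

lemma negAddY_P12_P31 :
    W.negAddY xP12 xP31 yP12 (W.slope xP12 xP31 yP12 yP31) =
      5 / 8 * t ^ 3 - 6 * t ^ 2 + 31 / 2 * t - 12 := by
  rw [WeierstrassCurve.Affine.negAddY, addX_P12_P31, slope_P12_P31]
  simp only [xP12, yP12]
  ring

end

open scoped Classical in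
/-- The coordinates of `P₁₂` and `P₃₁` satisfy the Weierstrass equation of `W`, and
`P₁₂ + P₃₁ = ±Q₀` where `Q₀ = ((5/4)t² - 2t + 3, (5/8)t³ - 6t² + (31/2)t - 12)`
(whose `x`-coordinate gives the weak contact conic `C₃`). -/
theorem P12_add_P31_eq_Q0 :
    W.Equation xP12 yP12 ∧ W.Equation xP31 yP31 ∧
    ∃ (h12 : W.Nonsingular xP12 yP12) (h31 : W.Nonsingular xP31 yP31)
      (hQ0 : W.Nonsingular (5 / 4 * t ^ 2 - 2 * t + 3)
        (5 / 8 * t ^ 3 - 6 * t ^ 2 + 31 / 2 * t - 12)),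
      Point.some _ _ h12 + Point.some _ _ h31 = Point.some _ _ hQ0 ∨
      Point.some _ _ h12 + Point.some _ _ h31 = -Point.some _ _ hQ0 := by
  obtain ⟨hQ0, hsum⟩ := Point.exists_some_add_some_eq_neg_some nonsingular_P12 nonsingular_P31
    xP12_ne_xP31 addX_P12_P31 negAddY_P12_P31
  exact ⟨equation_P12, equation_P31, nonsingular_P12, nonsingular_P31, hQ0, Or.inr hsum⟩

end
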